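/- Let c₁₁, c₄₄, c₆₆ ∈ ℝ and let C be the fourth-order tensor determined through the Voigt map by the symmetric 6×6 matrix whose rows are (c₁₁, c₁₁−2c₆₆, c₁₁−2c₄₄, 0,0,0), (c₁₁−2c₆₆, c₁₁, c₁₁−2c₄₄, 0,0,0), (c₁₁−2c₄₄, c₁₁−2c₄₄, c₁₁, 0,0,0), (0,0,0,c₄₄,0,0), (0,0,0,0,c₄₄,0), (0,0,0,0,0,c₆₆) (Medium III). Then for every n = (n₁,n₂,n₃) ∈ ℝ³ the Christoffel matrix Γ(n) equals [[c₁₁n₁² + c₆₆n₂² + c₄₄n₃², (c₁₁−c₆₆)n₁n₂, (c₁₁−c₄₄)n₁n₃], [(c₁₁−c₆₆)n₁n₂, c₆₆n₁² + c₁₁n₂² + c₄₄n₃², (c₁₁−c₄₄)n₂n₃], [(c₁₁−c₄₄)n₁n₃, (c₁₁−c₄₄)n₂n₃, c₄₄(n₁²+n₂²) + c₁₁n₃²]], and the vectors D₁ = (n₁,n₂,n₃), D₂ = (n₂,−n₁,0), D₃ = (−n₁n₃, −n₂n₃, n₁²+n₂²) satisfy Γ(n)D₁ = c₁₁(n₁²+n₂²+n₃²)D₁,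 Γ(n)D₂ = (c₆₆(n₁²+n₂²) + c₄₄n₃²)D₂, and Γ(n)D₃ = c₄₄(n₁²+n₂²+n₃²)D₃. -/
import Mathlib


open Finset

/-- The Voigt index map (0-based): `p(0,0)=0, p(1,1)=1, p(2,2)=2`,
`p(1,2)=p(2,1)=3, p(0,2)=p(2,0)=4, p(0,1)=p(1,0)=5`. -/
def voigt (i j : Fin 3) : Fin 6 :=
  if h : i = j then i.castLE (by norm_num)
  else ⟨6 - (i.1 + j.1), by
    have hij : i.1 ≠ j.1 := fun hc => h (Fin.ext hc)
    omega⟩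

/-- The fourth-order tensor determined by a 6×6 matrix through the Voigt map. -/
def ofVoigt (μ : Matrix (Fin 6) (Fin 6) ℝ) (i j k l : Fin 3) : ℝ :=
  μ (voigt i j) (voigt k l)

/-- The Christoffel matrix associated with a fourth-order tensor `C` on `ℝ³`,
with entries `Γ(n)_{ij} = Σ_{k,l} C_{kilj} n_k n_l`. -/
def christoffel (C : Fin 3 → Fin 3 → Fin 3 → Fin 3 → ℝ) (n : Fin 3 → ℝ) :
    Matrix (Fin 3) (Fin 3) ℝ :=
  Matrix.of fun i j => ∑ k, ∑ l, C k i l j * n k * n l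


section voigtAux
@[local simp] lemma voigt00 : voigt 0 0 = 0 := rfl
@[local simp] lemma voigt11 : voigt 1 1 = 1 := rfl
@[local simp] lemma voigt22 : voigt 2 2 = 2 := rfl
@[local simp] lemma voigt12 : voigt 1 2 = 3 := rfl
@[local simp] lemma voigt21 : voigt 2 1 = 3 := rfl
@[local simp] lemma voigt02 : voigt 0 2 = 4 := rfl
@[local simp] lemma voigt20 : voigt 2 0 = 4 := rfl
@[local simp] lemma voigt01 : voigt 0 1 = 5 := rfl
@[local simp] lemma voigt10 : voigt 1 0 = 5 := rfl

@[local simp] lemma cons_val_five {α : Type*} (a : α) (s : Fin 5 → α) :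
    Matrix.vecCons a s 5 = s 4 := rfl

set_option maxHeartbeats 1000000 in
/-- Medium III: a transversely isotropic medium with symmetry axis `e₃`.
Its Christoffel matrix has the stated form and the vectors `D₁ = (n₁,n₂,n₃)`,
`D₂ = (n₂,-n₁,0)`, `D₃ = (-n₁n₃,-n₂n₃,n₁²+n₂²)` are eigenvectors with the
stated eigenvalues. -/
theorem mediumIII_christoffel (c11 c44 c66 : ℝ) (n : Fin 3 → ℝ) :
    christoffel (ofVoigt !![c11, c11 - 2 * c66, c11 - 2 * c44, 0, 0, 0;
                            c11 - 2 * c66, c11, c11 - 2 * c44, 0, 0, 0;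
                            c11 - 2 * c44, c11 - 2 * c44, c11, 0, 0, 0;
                            0, 0, 0, c44, 0, 0;
                            0, 0, 0, 0, c44, 0;
                            0, 0, 0, 0, 0, c66]) n =
      !![c11 * n 0 ^ 2 + c66 * n 1 ^ 2 + c44 * n 2 ^ 2, (c11 - c66) * n 0 * n 1,
           (c11 - c44) * n 0 * n 2;
         (c11 - c66) * n 0 * n 1, c66 * n 0 ^ 2 + c11 * n 1 ^ 2 + c44 * n 2 ^ 2,
           (c11 - c44) * n 1 * n 2;
         (c11 - c44) * n 0 * n 2, (c11 - c44) * n 1 * n 2,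
           c44 * (n 0 ^ 2 + n 1 ^ 2) + c11 * n 2 ^ 2] ∧
    (christoffel (ofVoigt !![c11, c11 - 2 * c66, c11 - 2 * c44, 0, 0, 0;
                            c11 - 2 * c66, c11, c11 - 2 * c44, 0, 0, 0;
                            c11 - 2 * c44, c11 - 2 * c44, c11, 0, 0, 0;
                            0, 0, 0, c44, 0, 0;
                            0, 0, 0, 0, c44, 0;
                            0, 0, 0, 0, 0, c66]) n).mulVec ![n 0, n 1, n 2] =
      (c11 * (n 0 ^ 2 + n 1 ^ 2 + n 2 ^ 2)) • ![n 0, n 1, n 2] ∧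
    (christoffel (ofVoigt !![c11, c11 - 2 * c66, c11 - 2 * c44, 0, 0, 0;
                            c11 - 2 * c66, c11, c11 - 2 * c44, 0, 0, 0;
                            c11 - 2 * c44, c11 - 2 * c44, c11, 0, 0, 0;
                            0, 0, 0, c44, 0, 0;
                            0, 0, 0, 0, c44, 0;
                            0, 0, 0, 0, 0, c66]) n).mulVec ![n 1, -n 0, 0] =
      (c66 * (n 0 ^ 2 + n 1 ^ 2) + c44 * n 2 ^ 2) • ![n 1, -n 0, 0] ∧
    (christoffel (ofVoigt !![c11, c11 - 2 * c66, c11 - 2 * c44, 0, 0, 0;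
                            c11 - 2 * c66, c11, c11 - 2 * c44, 0, 0, 0;
                            c11 - 2 * c44, c11 - 2 * c44, c11, 0, 0, 0;
                            0, 0, 0, c44, 0, 0;
                            0, 0, 0, 0, c44, 0;
                            0, 0, 0, 0, 0, c66]) n).mulVec
        ![-(n 0 * n 2), -(n 1 * n 2), n 0 ^ 2 + n 1 ^ 2] =
      (c44 * (n 0 ^ 2 + n 1 ^ 2 + n 2 ^ 2)) • ![-(n 0 * n 2), -(n 1 * n 2), n 0 ^ 2 + n 1 ^ 2] := by
  refine ⟨?_, ?_, ?_, ?_⟩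
  · funext i j
    fin_cases i <;> fin_cases j <;>
      simp [christoffel, ofVoigt, Fin.sum_univ_three, Matrix.cons_val_succ,
        Matrix.vecHead, Matrix.vecTail] <;> ring
  all_goals
    funext i
    fin_cases i <;>
      simp [christoffel, ofVoigt, Matrix.mulVec, dotProduct,
        Fin.sum_univ_three, Matrix.cons_val_succ, Matrix.vecHead, Matrix.vecTail] <;> ring

end voigtAux
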